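/- Let ρ ∈ [0, 1) and define φ_ρ : ℝ → ℝ by φ_ρ(t) = ∫ max(0, ρt + √(1−ρ²)·u) dγ(u). Then φ_ρ is twice differentiable on ℝ and for every t ∈ ℝ, |φ_ρ''(t)| ≤ 4ρ²/√(1−ρ²); in particular, φ_ρ' is Lipschitz continuous with constant 4ρ²/√(1−ρ²). -/

import Mathlib

open MeasureTheory ProbabilityTheory

/-- The centered Gaussian measure `N(0, σ²)` on `ℝ`. -/
noncomputable def gaussMeasure (σ : ℝ) : Measure ℝ :=
  gaussianReal 0 (Real.toNNReal (σ ^ 2))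

/-- The `ρ`-smoothed ReLU `φ_ρ = U_ρ φ`, the image of the ReLU under the
Ornstein–Uhlenbeck noise operator. -/
noncomputable def smoothedRelu (ρ : ℝ) (t : ℝ) : ℝ :=
  ∫ u, max 0 (ρ * t + Real.sqrt (1 - ρ ^ 2) * u) ∂(gaussMeasure 1)

namespace SmoothedReluAux

open Real Filter Set Topology
open scoped NNReal ENNReal

/-- Standard normal density. -/
noncomputable def P (x : ℝ) : ℝ := (Real.sqrt (2 * Real.pi))⁻¹ * Real.exp (-x ^ 2 / 2)

/-- Standard normal CDF. -/
noncomputable def G (s : ℝ) : ℝ := ∫ x in Set.Iic s, P x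

lemma P_eq : P = gaussianPDFReal 0 1 := by
  funext x
  simp [P, gaussianPDFReal]

lemma P_nonneg (x : ℝ) : 0 ≤ P x := by
  have h1 : (0:ℝ) ≤ (Real.sqrt (2 * Real.pi))⁻¹ := by positivity
  exact mul_nonneg h1 (Real.exp_nonneg _)

lemma P_le_one (x : ℝ) : P x ≤ 1 := by
  have h1 : (1:ℝ) ≤ Real.sqrt (2 * Real.pi) := by
    rw [show (1:ℝ) = Real.sqrt 1 by simp]
    exact Real.sqrt_le_sqrt (by nlinarith [Real.pi_gt_three])
  have h2 : (Real.sqrt (2 * Real.pi))⁻¹ ≤ 1 := by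
    rw [inv_le_one_iff₀]; right; exact h1
  have h3 : Real.exp (-x ^ 2 / 2) ≤ 1 := by
    rw [Real.exp_le_one_iff]
    nlinarith [sq_nonneg x]
  have h4 : (0:ℝ) ≤ (Real.sqrt (2 * Real.pi))⁻¹ := by positivity
  calc (Real.sqrt (2 * Real.pi))⁻¹ * Real.exp (-x ^ 2 / 2) ≤ 1 * 1 :=
        mul_le_mul h2 h3 (Real.exp_nonneg _) zero_le_one
    _ = 1 := by ring

lemma continuous_P : Continuous P := by
  unfold P; fun_prop

lemma integrable_P : Integrable P := by
  rw [P_eq]; exact integrable_gaussianPDFReal 0 1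

lemma P_even (x : ℝ) : P (-x) = P x := by simp [P]

lemma integrable_xP : Integrable (fun x : ℝ => x * P x) := by
  have h := (integrable_mul_exp_neg_mul_sq (b := (1:ℝ)/2) (by norm_num)).const_mul
    (Real.sqrt (2 * Real.pi))⁻¹
  have he : (fun x : ℝ => x * P x)
      = fun x : ℝ => (Real.sqrt (2 * Real.pi))⁻¹ * (x * Real.exp (-(1/2) * x ^ 2)) := by
    funext x
    rw [P, show -(1/2) * x ^ 2 = -x ^ 2 / 2 by ring]
    ring
  rw [he]; exact h

lemma hasDerivAt_P (x : ℝ) : HasDerivAt P (-x * P x) x := by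
  have h1 : HasDerivAt (fun y : ℝ => -y ^ 2 / 2) (-x) x := by
    have h := ((hasDerivAt_pow 2 x).neg).div_const 2
    refine h.congr_deriv ?_
    norm_num
    ring
  have h2 := (h1.exp).const_mul (Real.sqrt (2 * Real.pi))⁻¹
  exact h2.congr_deriv (by unfold P; ring)

lemma tendsto_P : Tendsto P atTop (𝓝 0) := by
  have h0 : Tendsto (fun x : ℝ => x ^ 2 / 2) atTop atTop :=
    (tendsto_pow_atTop two_ne_zero).atTop_div_const (by norm_num)
  have h1 : Tendsto (fun x : ℝ => -x ^ 2 / 2) atTop atBot := by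
    have := tendsto_neg_atTop_atBot.comp h0
    refine this.congr fun x => ?_
    simp [Function.comp, neg_div]
  have h2 := Real.tendsto_exp_atBot.comp h1
  have h3 := h2.const_mul (Real.sqrt (2 * Real.pi))⁻¹
  rw [mul_zero] at h3
  exact h3

lemma integral_Ioi_xP (c : ℝ) : ∫ x in Set.Ioi c, x * P x = P c := by
  have h := integral_Ioi_of_hasDerivAt_of_tendsto' (f := fun x => -P x)
    (f' := fun x => x * P x) (a := c) (m := 0)
    (fun x _ => by have := (hasDerivAt_P x).neg; simp only [neg_mul, neg_neg] at this; exact this)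
    (integrable_xP.integrableOn)
    (by simpa using tendsto_P.neg)
  simpa using h

lemma G_Ici (s : ℝ) : ∫ x in Set.Ici (-s), P x = G s := by
  rw [integral_Ici_eq_integral_Ioi, ← integral_comp_neg_Iic s P]
  unfold G
  refine setIntegral_congr_fun measurableSet_Iic fun x _ => ?_
  exact (P_even x).symm ▸ rfl

lemma key (s : ℝ) : ∫ x, P x * max 0 (s + x) = s * G s + P s := by
  have h0 : ∀ x ∉ Set.Ici (-s), P x * max 0 (s + x) = 0 := by
    intro x hx
    have hx' : s + x < 0 := by
      simp only [Set.mem_Ici, not_le] at hx; linarith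
    rw [max_eq_left hx'.le, mul_zero]
  rw [← setIntegral_eq_integral_of_forall_compl_eq_zero h0]
  have hcong : Set.EqOn (fun x => P x * max 0 (s + x)) (fun x => s * P x + x * P x)
      (Set.Ici (-s)) := by
    intro x hx
    have hx' : 0 ≤ s + x := by
      simp only [Set.mem_Ici] at hx; linarith
    simp only
    rw [max_eq_right hx']; ring
  rw [setIntegral_congr_fun measurableSet_Ici hcong]
  rw [integral_add ((integrable_P.const_mul s).integrableOn) (integrable_xP.integrableOn)]
  rw [integral_const_mul, G_Ici]
  rw [integral_Ici_eq_integral_Ioi, integral_Ioi_xP, P_even]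

lemma integral_gauss (g : ℝ → ℝ) :
    ∫ u, g u ∂(gaussianReal 0 1) = ∫ u, P u * g u := by
  rw [gaussianReal_of_var_ne_zero 0 one_ne_zero]
  have hpdf : gaussianPDF 0 1 = fun x => ((Real.toNNReal (P x) : ℝ≥0) : ℝ≥0∞) := by
    funext x
    rw [gaussianPDF, P_eq]
    rfl
  rw [hpdf, integral_withDensity_eq_integral_smul
    ((continuous_P.measurable).real_toNNReal) g]
  refine integral_congr_ae (Filter.Eventually.of_forall fun x => ?_)
  simp [NNReal.smul_def, Real.coe_toNNReal _ (P_nonneg x)]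

lemma hasDerivAt_G (s : ℝ) : HasDerivAt G (P s) s := by
  have hG : G = fun u => G 0 + ∫ x in (0:ℝ)..u, P x := by
    funext u
    rw [← intervalIntegral.integral_Iic_sub_Iic integrable_P.integrableOn
      integrable_P.integrableOn]
    unfold G; ring
  rw [hG]
  exact ((continuous_P.integral_hasStrictDerivAt 0 s).hasDerivAt).const_add (G 0)

lemma closed_form {ρ : ℝ} (hρ : ρ ∈ Set.Ico (0:ℝ) 1) (t : ℝ) :
    smoothedRelu ρ t = ρ * t * G (ρ * t / Real.sqrt (1 - ρ ^ 2))
      + Real.sqrt (1 - ρ ^ 2) * P (ρ * t / Real.sqrt (1 - ρ ^ 2)) := by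
  obtain ⟨hρ0, hρ1⟩ := hρ
  set b := Real.sqrt (1 - ρ ^ 2) with hbdef
  have hb : 0 < b := Real.sqrt_pos.mpr (by nlinarith)
  set s := ρ * t / b with hsdef
  have hbs : ρ * t = b * s := by
    rw [hsdef]; field_simp
  unfold smoothedRelu gaussMeasure
  rw [show Real.toNNReal ((1:ℝ) ^ 2) = 1 by norm_num]
  rw [integral_gauss]
  have hmax : ∀ u : ℝ, P u * max 0 (ρ * t + b * u) = b * (P u * max 0 (s + u)) := by
    intro u
    rw [hbs, ← mul_add,
      show max 0 (b * (s + u)) = b * max 0 (s + u) from by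
        rw [mul_max_of_nonneg _ _ hb.le, mul_zero]]
    ring
  rw [← hbdef]
  simp_rw [hmax]
  rw [integral_const_mul, key s, hbs]
  ring

end SmoothedReluAux

open SmoothedReluAux in
/-- Claim F.1: the smoothed ReLU is twice differentiable with second
derivative uniformly bounded by `4ρ²/√(1−ρ²)`; in particular its derivative is Lipschitz
with that constant. -/
theorem smoothedRelu_second_deriv_bound (ρ : ℝ) (hρ : ρ ∈ Set.Ico (0 : ℝ) 1) :
    (∀ t : ℝ, DifferentiableAt ℝ (smoothedRelu ρ) t ∧
      DifferentiableAt ℝ (deriv (smoothedRelu ρ)) t) ∧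
    (∀ t : ℝ, |deriv (deriv (smoothedRelu ρ)) t| ≤ 4 * ρ ^ 2 / Real.sqrt (1 - ρ ^ 2)) ∧
    LipschitzWith (Real.toNNReal (4 * ρ ^ 2 / Real.sqrt (1 - ρ ^ 2)))
      (deriv (smoothedRelu ρ)) := by
  obtain ⟨hρ0, hρ1⟩ := hρ
  set b := Real.sqrt (1 - ρ ^ 2) with hbdef
  have hb : 0 < b := Real.sqrt_pos.mpr (by nlinarith)
  have hFeq : smoothedRelu ρ = fun t => ρ * t * G (ρ * t / b) + b * P (ρ * t / b) :=
    funext fun t => closed_form ⟨hρ0, hρ1⟩ t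
  have hs : ∀ t : ℝ, HasDerivAt (fun t : ℝ => ρ * t / b) (ρ / b) t := fun t => by
    simpa using ((hasDerivAt_id t).const_mul ρ).div_const b
  have hD1 : ∀ t : ℝ, HasDerivAt (smoothedRelu ρ) (ρ * G (ρ * t / b)) t := by
    intro t
    rw [hFeq]
    have h1 : HasDerivAt (fun t : ℝ => G (ρ * t / b)) (P (ρ * t / b) * (ρ / b)) t :=
      (hasDerivAt_G _).comp t (hs t)
    have h2 : HasDerivAt (fun t : ℝ => P (ρ * t / b))
        ((-(ρ * t / b) * P (ρ * t / b)) * (ρ / b)) t :=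
      (hasDerivAt_P _).comp t (hs t)
    have h3 : HasDerivAt (fun t : ℝ => ρ * t) ρ t := by
      simpa using (hasDerivAt_id t).const_mul ρ
    have h4 := (h3.mul h1).add (h2.const_mul b)
    refine h4.congr_deriv ?_
    have hb' : b ≠ 0 := hb.ne'
    field_simp
    ring
  have hderiv1 : deriv (smoothedRelu ρ) = fun t => ρ * G (ρ * t / b) :=
    funext fun t => (hD1 t).deriv
  have hD2 : ∀ t : ℝ, HasDerivAt (deriv (smoothedRelu ρ))
      (ρ * (P (ρ * t / b) * (ρ / b))) t := by
    intro t
    rw [hderiv1]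
    exact ((hasDerivAt_G _).comp t (hs t)).const_mul ρ
  have hd2val : ∀ t : ℝ, deriv (deriv (smoothedRelu ρ)) t = ρ * (P (ρ * t / b) * (ρ / b)) :=
    fun t => (hD2 t).deriv
  have hbound : ∀ t : ℝ, |deriv (deriv (smoothedRelu ρ)) t| ≤ 4 * ρ ^ 2 / b := by
    intro t
    rw [hd2val t]
    have hP0 : 0 ≤ P (ρ * t / b) := P_nonneg _
    have hP1 : P (ρ * t / b) ≤ 1 := P_le_one _
    rw [abs_of_nonneg (mul_nonneg hρ0 (mul_nonneg hP0 (div_nonneg hρ0 hb.le)))]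
    rw [show ρ * (P (ρ * t / b) * (ρ / b)) = ρ ^ 2 * P (ρ * t / b) / b by ring]
    rw [div_le_div_iff_of_pos_right hb]
    nlinarith [sq_nonneg ρ]
  refine ⟨fun t => ⟨(hD1 t).differentiableAt, (hD2 t).differentiableAt⟩, hbound, ?_⟩
  apply lipschitzWith_of_nnnorm_deriv_le (fun t => (hD2 t).differentiableAt)
  intro t
  have h := hbound t
  have hc : (0:ℝ) ≤ 4 * ρ ^ 2 / b := by positivity
  rw [← NNReal.coe_le_coe, coe_nnnorm, Real.coe_toNNReal _ hc, Real.norm_eq_abs]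
  exact h
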